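/- arXiv:1203.1678 — 2 statements merged into one kernel-verified Lean document; each statement's English description precedes it below -/
import Mathlib

section
/- Let (X,S) be an association scheme, H ⊆ T closed subsets with T strongly normal in S, such that (i) sH = sT for each s ∈ S \ T and (ii) tH = {t} for each t ∈ T \ H. Then for each ι ∈ Aut(T) fixing every element of H, the map ι̃ : S → S given by s ↦ s for s ∈ S \ T and t ↦ t^ι for t ∈ T preserves all intersection numbers, i.e., ι̃ ∈ Aut(S). -/
open scoped Classical

/-- The diagonal relation `1_X`. -/
def diagRel (X : Type*) : Set (X × X) := {p | p.1 = p.2}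

/-- The converse relation `s*`. -/
def conv {X : Type*} (s : Set (X × X)) : Set (X × X) := {p | (p.2, p.1) ∈ s}

/-- The intersection number `c_{st}^u`, well-defined for association schemes. -/
noncomputable def inum {X : Type*} (s t u : Set (X × X)) : ℕ :=
  sSup {n | ∃ p ∈ u, n = Nat.card {z : X | (p.1, z) ∈ s ∧ (z, p.2) ∈ t}}

/-- `(X, S)` is an association scheme. -/
def IsScheme {X : Type*} (S : Set (Set (X × X))) : Prop :=
  (∀ x y : X, ∃! s, s ∈ S ∧ (x, y) ∈ s) ∧
  (∀ s ∈ S, s.Nonempty) ∧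
  diagRel X ∈ S ∧
  (∀ s ∈ S, conv s ∈ S) ∧
  (∀ s ∈ S, ∀ t ∈ S, ∀ u ∈ S, ∀ p ∈ u, ∀ q ∈ u,
    Nat.card {z : X | (p.1, z) ∈ s ∧ (z, p.2) ∈ t} =
      Nat.card {z : X | (q.1, z) ∈ s ∧ (z, q.2) ∈ t})

/-- The complex product `PQ` of subsets of `S`. -/
noncomputable def cprod {X : Type*} (S P Q : Set (Set (X × X))) : Set (Set (X × X)) :=
  {u ∈ S | ∃ p ∈ P, ∃ q ∈ Q, inum p q u ≠ 0}

/-- The valency `n_s`. -/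
noncomputable def nval {X : Type*} (s : Set (X × X)) : ℕ :=
  sSup {n | ∃ x : X, n = Nat.card {y : X | (x, y) ∈ s}}

/-- `T` is a closed subset of `S`. -/
def IsClosedSub {X : Type*} (S T : Set (Set (X × X))) : Prop :=
  T.Nonempty ∧ T ⊆ S ∧ cprod S T T ⊆ T

/-- `T` is strongly normal in `S`. -/
def IsStronglyNormal {X : Type*} (S T : Set (Set (X × X))) : Prop :=
  IsClosedSub S T ∧ ∀ s ∈ S, cprod S (cprod S {conv s} T) {s} ⊆ T

/-- The thin radical `O_θ(S)`. -/
noncomputable def thinRadical {X : Type*} (S : Set (Set (X × X))) : Set (Set (X × X)) :=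
  {s ∈ S | nval s = 1}

/-- The thin residue `O^θ(S)`. -/
noncomputable def thinResidue {X : Type*} (S : Set (Set (X × X))) : Set (Set (X × X)) :=
  ⋂₀ {T | IsStronglyNormal S T}

/-- `T` is thin: all valencies `1`. -/
def IsThin {X : Type*} (T : Set (Set (X × X))) : Prop := ∀ t ∈ T, nval t = 1

/-- The left stabilizer `L(s) = {t ∈ T | ts = {s}}`. -/
noncomputable def lstab {X : Type*} (S T : Set (Set (X × X))) (s : Set (X × X)) :
    Set (Set (X × X)) := {t ∈ T | cprod S {t} {s} = {s}}

/-- `e` is an isomorphism from `C_p × C_p` onto the thin closed subset `T`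
(with the relational product as group operation). -/
def IsoElemAb {X : Type*} (S T : Set (Set (X × X))) (p : ℕ)
    (e : ZMod p × ZMod p → Set (X × X)) : Prop :=
  (∀ a, e a ∈ T) ∧ Function.Injective e ∧ (∀ t ∈ T, ∃ a, e a = t) ∧
  e 0 = diagRel X ∧ ∀ a b, cprod S {e a} {e b} = {e (a + b)}

/-- The coset `xT`. -/
def coset {X : Type*} (T : Set (Set (X × X))) (x : X) : Set X := {y | ∃ t ∈ T, (x, y) ∈ t}

/-- The point set `X/T`. -/
def pts {X : Type*} (T : Set (Set (X × X))) : Set (Set X) := {C | ∃ x, C = coset T x}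

/-- `L_{ij}` for the cosets of `x` and `y`: the left stabilizer of any relation containing
`(x, y)`. -/
noncomputable def pairStab {X : Type*} (S T : Set (Set (X × X))) (x y : X) :
    Set (Set (X × X)) :=
  {t ∈ T | ∀ s ∈ S, (x, y) ∈ s → cprod S {t} {s} = {s}}

/-- The line `L_i(M)` through the coset of `x` determined by the subgroup `M < T`. -/
noncomputable def lineOf {X : Type*} (S T : Set (Set (X × X))) (x : X)
    (M : Set (Set (X × X))) : Set (Set X) :=
  insert (coset T x) {C | ∃ y, C = coset T y ∧ coset T y ≠ coset T x ∧ pairStab S T x y = M}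

/-- The set of lines of the incidence structure on `X/T`. -/
noncomputable def linesOf {X : Type*} (S T : Set (Set (X × X))) : Set (Set (Set X)) :=
  {ℓ | ∃ x M, IsClosedSub S M ∧ M ⊆ T ∧ M ≠ {diagRel X} ∧ M ≠ T ∧
    ℓ = lineOf S T x M ∧ 2 ≤ Nat.card ℓ}

/-- The extension of a permutation `ι` of `T` to `S`, fixing `S \\ T` pointwise. -/
noncomputable def extOf {X : Type*} (T : Set (Set (X × X)))
    (ι : Set (X × X) → Set (X × X)) (s : Set (X × X)) : Set (X × X) :=
  if s ∈ T then ι s else s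

/-! Since `T` is closed, `c_{uv}^w = 0` whenever exactly two of `u, v, w` lie in `T`, and `ι̃` is
the identity outside `T`; transposition `c_{uv}^w = c_{v*u*}^{w*}` and the identity
`n_w c_{uv}^w = n_u c_{vw*}^{u*}` reduce the remaining cases to `c_{ut}^w` with `u ∉ T` and
`t ∈ T \ H` in the middle.

For such `u, t` and `(x, y) ∈ w ⊆ uT`, count pairs `(a, b)` with `(x, a) ∈ u`, `(a, y) ∈ t`,
`(b, y) ∈ t` and `a, b` in one `H`-coset. By (ii) `t` is a union of `H`-cosets, so each of the
`c_{ut}^w` admissible `a` is paired with all `∑_{h ∈ H} n_h` points of its `H`-coset; by (i) the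
`H`-coset of each of the `n_{t*}` admissible `b` meets `u(x)`,
hence in `∑_{h ∈ H} c_{uh}^u` points. Thus `c_{ut}^w · ∑_{h ∈ H} n_h = n_{t*} · ∑_{h ∈ H} c_{uh}^u`
and `c_{ut}^w` depends on `t` only through `n_{t*}`, which `ι` preserves. -/

section

open Finset

variable {X : Type*} {S C H T : Set (Set (X × X))} {r s t u v w : Set (X × X)}

lemma card_setOf_eq_card_filter [Fintype X] (p : X → Prop) [DecidablePred p] :
    Nat.card {z | p z} = #{z | p z} := by
  rw [Nat.card_eq_fintype_card, Fintype.card_subtype]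
  rfl

lemma inum_eq_inum_conv (s t u : Set (X × X)) :
    inum s t u = inum (conv t) (conv s) (conv u) := by
  unfold inum
  congr 1
  ext n
  constructor <;> rintro ⟨⟨a, b⟩, hp, rfl⟩ <;>
    exact ⟨(b, a), hp, by simp only [conv, Set.mem_ofPred_eq, and_comm]⟩

namespace IsScheme

lemma nonempty (hS : IsScheme S) (hs : s ∈ S) : s.Nonempty := hS.2.1 s hs

lemma diag_mem (hS : IsScheme S) : diagRel X ∈ S := hS.2.2.1

lemma conv_mem (hS : IsScheme S) (hs : s ∈ S) : conv s ∈ S := hS.2.2.2.1 s hs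

lemma exists_mem (hS : IsScheme S) (x y : X) : ∃ s ∈ S, (x, y) ∈ s :=
  (hS.1 x y).exists

lemma eq_of_mem_of_mem (hS : IsScheme S) {p : X × X} (hs : s ∈ S) (ht : t ∈ S) (hps : p ∈ s)
    (hpt : p ∈ t) : s = t :=
  (hS.1 p.1 p.2).unique ⟨hs, hps⟩ ⟨ht, hpt⟩

lemma inum_eq_card (hS : IsScheme S) (hs : s ∈ S) (ht : t ∈ S) (hu : u ∈ S) {x y : X}
    (hxy : (x, y) ∈ u) : inum s t u = Nat.card {z | (x, z) ∈ s ∧ (z, y) ∈ t} := by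
  have : {n | ∃ p ∈ u, n = Nat.card {z | (p.1, z) ∈ s ∧ (z, p.2) ∈ t}} =
      {Nat.card {z | (x, z) ∈ s ∧ (z, y) ∈ t}} := by
    ext n
    constructor
    · rintro ⟨p, hp, rfl⟩
      exact hS.2.2.2.2 s hs t ht u hu p hp (x, y) hxy
    · rintro rfl
      exact ⟨(x, y), hxy, rfl⟩
  rw [inum, this, csSup_singleton]

lemma inum_ne_zero_iff [Finite X] (hS : IsScheme S) (hs : s ∈ S) (ht : t ∈ S) (hu : u ∈ S) :
    inum s t u ≠ 0 ↔ ∃ x y z, (x, y) ∈ u ∧ (x, z) ∈ s ∧ (z, y) ∈ t := by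
  constructor
  · intro h
    obtain ⟨⟨x, y⟩, hxy⟩ := hS.nonempty hu
    rw [hS.inum_eq_card hs ht hu hxy] at h
    obtain ⟨⟨z, hz⟩⟩ := (Nat.card_ne_zero.1 h).1
    exact ⟨x, y, z, hxy, hz⟩
  · rintro ⟨x, y, z, hxy, hz⟩
    rw [hS.inum_eq_card hs ht hu hxy]
    exact Nat.card_ne_zero.2 ⟨⟨z, hz⟩, inferInstance⟩

lemma card_right_eq (hS : IsScheme S) (hs : s ∈ S) (x y : X) :
    Nat.card {z | (x, z) ∈ s} = Nat.card {z | (y, z) ∈ s} := by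
  simpa [conv] using hS.2.2.2.2 s hs (conv s) (hS.conv_mem hs) _ hS.diag_mem (x, x) rfl (y, y) rfl

lemma nval_eq_card (hS : IsScheme S) (hs : s ∈ S) (x : X) : nval s = Nat.card {z | (x, z) ∈ s} := by
  have : {n | ∃ y : X, n = Nat.card {z | (y, z) ∈ s}} = {Nat.card {z | (x, z) ∈ s}} := by
    ext n
    constructor
    · rintro ⟨y, rfl⟩
      exact hS.card_right_eq hs y x
    · rintro rfl
      exact ⟨x, rfl⟩
  rw [nval, this, csSup_singleton]

lemma nval_pos [Finite X] (hS : IsScheme S) (hs : s ∈ S) : 0 < nval s := by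
  obtain ⟨⟨x, y⟩, hxy⟩ := hS.nonempty hs
  rw [hS.nval_eq_card hs x]
  exact Nat.card_pos_iff.2 ⟨⟨y, hxy⟩, inferInstance⟩

lemma exists_right_mem [Finite X] (hS : IsScheme S) (hs : s ∈ S) (x : X) : ∃ z, (x, z) ∈ s := by
  have h := hS.nval_pos hs
  rw [hS.nval_eq_card hs x] at h
  obtain ⟨⟨z, hz⟩⟩ := (Nat.card_pos_iff.1 h).1
  exact ⟨z, hz⟩

lemma mem_cprod [Finite X] (hS : IsScheme S) {P Q : Set (Set (X × X))} (hP : P ⊆ S) (hQ : Q ⊆ S)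
    (hu : u ∈ S) {x y z : X} (hxy : (x, y) ∈ u) (hs : s ∈ P) (ht : t ∈ Q) (hxz : (x, z) ∈ s)
    (hzy : (z, y) ∈ t) : u ∈ cprod S P Q :=
  ⟨hu, s, hs, t, ht, (hS.inum_ne_zero_iff (hP hs) (hQ ht) hu).2 ⟨x, y, z, hxy, hxz, hzy⟩⟩

lemma inum_conv_diagRel (hS : IsScheme S) (hs : s ∈ S) : inum s (conv s) (diagRel X) = nval s := by
  obtain ⟨⟨x, y⟩, -⟩ := hS.nonempty hs
  rw [hS.inum_eq_card hs (hS.conv_mem hs) hS.diag_mem (show (x, x) ∈ diagRel X from rfl),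
    hS.nval_eq_card hs x]
  simp [conv]

lemma eq_conv_of_inum_diagRel_ne_zero [Finite X] (hS : IsScheme S) (hs : s ∈ S) (ht : t ∈ S)
    (h : inum s t (diagRel X) ≠ 0) : t = conv s := by
  obtain ⟨x, y, z, hxy, hxz, hzy⟩ := (hS.inum_ne_zero_iff hs ht hS.diag_mem).1 h
  obtain rfl : x = y := hxy
  exact hS.eq_of_mem_of_mem ht (hS.conv_mem hs) hzy hxz

lemma eq_diagRel_of_inum_ne_zero [Finite X] (hS : IsScheme S) (hs : s ∈ S)
    (h : inum s (diagRel X) (diagRel X) ≠ 0) : s = diagRel X := by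
  obtain ⟨x, y, z, hxy, hxz, hzy⟩ := (hS.inum_ne_zero_iff hs hS.diag_mem hS.diag_mem).1 h
  obtain rfl : x = y := hxy
  obtain rfl : z = x := hzy
  exact hS.eq_of_mem_of_mem hs hS.diag_mem hxz rfl

lemma inum_diagRel_ne_zero [Finite X] (hS : IsScheme S) (hs : s ∈ S) :
    inum (diagRel X) s s ≠ 0 := by
  obtain ⟨⟨x, y⟩, hxy⟩ := hS.nonempty hs
  exact (hS.inum_ne_zero_iff hS.diag_mem hs hs).2 ⟨x, y, x, hxy, rfl, hxy⟩

lemma exists_cycle [Finite X] (hS : IsScheme S) (hs : s ∈ S) :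
    ∃ g : ℕ → X, (∀ n, (g n, g (n + 1)) ∈ s) ∧ ∃ i j, i < j ∧ g i = g j := by
  choose f hf using hS.exists_right_mem hs
  obtain ⟨⟨x, -⟩, -⟩ := hS.nonempty hs
  refine ⟨fun n => f^[n] x, fun n => ?_, ?_⟩
  · simpa only [Function.iterate_succ_apply'] using hf (f^[n] x)
  · obtain ⟨i, j, hij, hg⟩ := Finite.exists_ne_map_eq_of_infinite fun n => f^[n] x
    rcases hij.lt_or_gt with h | h
    · exact ⟨i, j, h, hg⟩
    · exact ⟨j, i, h, hg.symm⟩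

end IsScheme

namespace IsClosedSub

lemma subset (hC : IsClosedSub S C) : C ⊆ S := hC.2.1

lemma mem_of_mem_sUnion (hS : IsScheme S) (hC : IsClosedSub S C) {p : X × X} (hr : r ∈ S)
    (hpr : p ∈ r) (hpC : p ∈ ⋃₀ C) : r ∈ C := by
  obtain ⟨c, hc, hpc⟩ := hpC
  rwa [← hS.eq_of_mem_of_mem (hC.subset hc) hr hpc hpr]

lemma sUnion_trans [Finite X] (hS : IsScheme S) (hC : IsClosedSub S C) {x y z : X}
    (hxy : (x, y) ∈ ⋃₀ C) (hyz : (y, z) ∈ ⋃₀ C) : (x, z) ∈ ⋃₀ C := by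
  obtain ⟨a, ha, hxy⟩ := hxy
  obtain ⟨b, hb, hyz⟩ := hyz
  obtain ⟨u, hu, hxz⟩ := hS.exists_mem x z
  exact ⟨u, hC.2.2 (hS.mem_cprod hC.subset hC.subset hu hxz ha hb hxy hyz), hxz⟩

lemma walk_mem_sUnion [Finite X] (hS : IsScheme S) (hC : IsClosedSub S C) {g : ℕ → X}
    (hg : ∀ n, (g n, g (n + 1)) ∈ ⋃₀ C) {i j : ℕ} (hij : i < j) : (g i, g j) ∈ ⋃₀ C := by
  induction j, hij using Nat.le_induction with
  | base => exact hg i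
  | succ j _ ih => exact hC.sUnion_trans hS ih (hg j)

lemma diag_mem [Finite X] (hS : IsScheme S) (hC : IsClosedSub S C) : diagRel X ∈ C := by
  obtain ⟨t, ht⟩ := hC.1
  obtain ⟨g, hg, i, j, hij, hgij⟩ := hS.exists_cycle (hC.subset ht)
  have h := hC.walk_mem_sUnion hS (fun n => ⟨t, ht, hg n⟩) hij
  rw [← hgij] at h
  exact hC.mem_of_mem_sUnion hS hS.diag_mem rfl h

lemma sUnion_refl [Finite X] (hS : IsScheme S) (hC : IsClosedSub S C) (x : X) :
    (x, x) ∈ ⋃₀ C :=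
  ⟨diagRel X, hC.diag_mem hS, rfl⟩

lemma conv_mem [Finite X] (hS : IsScheme S) (hC : IsClosedSub S C) (ht : t ∈ C) :
    conv t ∈ C := by
  obtain ⟨g, hg, i, j, hij, hgij⟩ := hS.exists_cycle (hC.subset ht)
  have h : (g (i + 1), g j) ∈ ⋃₀ C := by
    rcases (Nat.succ_le_of_lt hij).eq_or_lt with h | h
    · rw [← h]
      exact hC.sUnion_refl hS _
    · exact hC.walk_mem_sUnion hS (fun n => ⟨t, ht, hg n⟩) h
  rw [← hgij] at h
  exact hC.mem_of_mem_sUnion hS (hS.conv_mem (hC.subset ht)) (hg i) h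

lemma sUnion_symm [Finite X] (hS : IsScheme S) (hC : IsClosedSub S C) {x y : X}
    (h : (x, y) ∈ ⋃₀ C) : (y, x) ∈ ⋃₀ C := by
  obtain ⟨c, hc, hxy⟩ := h
  exact ⟨conv c, hC.conv_mem hS hc, hxy⟩

lemma inum_eq_zero_of_not_mem_right [Finite X] (hS : IsScheme S) (hC : IsClosedSub S C)
    (hs : s ∈ C) (ht : t ∈ C) (hu : u ∈ S) (huC : u ∉ C) : inum s t u = 0 := by
  by_contra hne
  obtain ⟨x, y, z, hxy, hxz, hzy⟩ := (hS.inum_ne_zero_iff (hC.subset hs) (hC.subset ht) hu).1 hne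
  exact huC (hC.mem_of_mem_sUnion hS hu hxy (hC.sUnion_trans hS ⟨s, hs, hxz⟩ ⟨t, ht, hzy⟩))

lemma inum_eq_zero_of_not_mem_middle [Finite X] (hS : IsScheme S) (hC : IsClosedSub S C)
    (hs : s ∈ C) (ht : t ∈ S) (htC : t ∉ C) (hu : u ∈ C) : inum s t u = 0 := by
  by_contra hne
  obtain ⟨x, y, z, hxy, hxz, hzy⟩ := (hS.inum_ne_zero_iff (hC.subset hs) ht (hC.subset hu)).1 hne
  exact htC (hC.mem_of_mem_sUnion hS ht hzy
    (hC.sUnion_trans hS (hC.sUnion_symm hS ⟨s, hs, hxz⟩) ⟨u, hu, hxy⟩))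

lemma inum_eq_zero_of_not_mem_left [Finite X] (hS : IsScheme S) (hC : IsClosedSub S C)
    (hs : s ∈ S) (hsC : s ∉ C) (ht : t ∈ C) (hu : u ∈ C) : inum s t u = 0 := by
  by_contra hne
  obtain ⟨x, y, z, hxy, hxz, hzy⟩ := (hS.inum_ne_zero_iff hs (hC.subset ht) (hC.subset hu)).1 hne
  exact hsC (hC.mem_of_mem_sUnion hS hs hxz
    (hC.sUnion_trans hS ⟨u, hu, hxy⟩ (hC.sUnion_symm hS ⟨t, ht, hzy⟩)))

end IsClosedSub

lemma mem_of_sUnion_of_mem [Finite X] (hS : IsScheme S) (hH : IsClosedSub S H)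
    (hT : IsClosedSub S T) (h2 : ∀ t ∈ T \ H, cprod S {t} H = {t}) (ht : t ∈ T \ H) {x y z : X}
    (hxy : (x, y) ∈ ⋃₀ H) (hyz : (y, z) ∈ t) : (x, z) ∈ t := by
  obtain ⟨h, hh, hxy⟩ := hxy
  have hct : conv t ∈ T \ H := ⟨hT.conv_mem hS ht.1, fun hc => ht.2 (hH.conv_mem hS hc)⟩
  obtain ⟨r, hr, hzx⟩ := hS.exists_mem z x
  have hrt : r ∈ cprod S {conv t} H :=
    hS.mem_cprod (Set.singleton_subset_iff.2 (hS.conv_mem (hT.subset ht.1))) hH.subset hr hzx rfl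
      (hH.conv_mem hS hh) hyz hxy
  rw [h2 _ hct, Set.mem_singleton_iff] at hrt
  rw [hrt] at hzx
  exact hzx

lemma exists_mem_of_sUnion_mem [Finite X] (hS : IsScheme S) (hH : IsClosedSub S H)
    (hT : IsClosedSub S T) (h1 : ∀ s ∈ S \ T, cprod S {s} H = cprod S {s} T) (hu : u ∈ S \ T)
    {x y z : X} (hxy : (x, y) ∈ u) (hyz : (y, z) ∈ ⋃₀ T) : ∃ y', (x, y') ∈ u ∧ (y', z) ∈ ⋃₀ H := by
  obtain ⟨t, ht, hyz⟩ := hyz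
  obtain ⟨w, hw, hxz⟩ := hS.exists_mem x z
  have huS : {u} ⊆ S := Set.singleton_subset_iff.2 hu.1
  have hwT : w ∈ cprod S {u} T := hS.mem_cprod huS hT.subset hw hxz rfl ht hxy hyz
  obtain ⟨-, u', rfl, h, hh, hne⟩ := h1 u hu ▸ hwT
  rw [hS.inum_eq_card hu.1 (hH.subset hh) hw hxz] at hne
  obtain ⟨⟨y', hxy', hy'z⟩⟩ := (Nat.card_ne_zero.1 hne).1
  exact ⟨y', hxy', h, hh, hy'z⟩

section Counting

variable [Fintype X]

lemma IsScheme.inum_eq_card_filter (hS : IsScheme S) (hs : s ∈ S) (ht : t ∈ S) (hu : u ∈ S)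
    {x y : X} (hxy : (x, y) ∈ u) : inum s t u = #{z | (x, z) ∈ s ∧ (z, y) ∈ t} := by
  rw [hS.inum_eq_card hs ht hu hxy, card_setOf_eq_card_filter]

lemma IsScheme.nval_eq_card_filter (hS : IsScheme S) (hs : s ∈ S) (x : X) :
    nval s = #{z | (x, z) ∈ s} := by
  rw [hS.nval_eq_card hs x, card_setOf_eq_card_filter]

lemma IsScheme.nval_mul_inum (hS : IsScheme S) (hu : u ∈ S) (hv : v ∈ S) (ht : t ∈ S) :
    nval t * inum u v t = nval u * inum v (conv t) (conv u) := by
  obtain ⟨⟨x, -⟩, -⟩ := hS.nonempty ht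
  have key := card_mul_eq_card_mul (fun y z => (z, y) ∈ v) (s := {y | (x, y) ∈ t})
    (t := {z | (x, z) ∈ u}) (m := inum u v t) (n := inum v (conv t) (conv u))
    (fun y hy => ?_) (fun z hz => ?_)
  · rwa [hS.nval_eq_card_filter ht x, hS.nval_eq_card_filter hu x]
  · rw [mem_filter] at hy
    rw [hS.inum_eq_card_filter hu hv ht hy.2, bipartiteAbove, filter_filter]
  · rw [mem_filter] at hz
    rw [hS.inum_eq_card_filter hv (hS.conv_mem ht) (hS.conv_mem hu) (x := z) (y := x) hz.2,
      bipartiteBelow, filter_filter]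
    simp only [conv, Set.mem_ofPred_eq, and_comm]

lemma IsScheme.card_filter_mem_sUnion (hS : IsScheme S) {P : Set (Set (X × X))} (hP : P ⊆ S)
    (A : Finset X) (f : X → X × X) :
    #{z ∈ A | f z ∈ ⋃₀ P} = ∑ r ∈ P.toFinset, #{z ∈ A | f z ∈ r} := by
  rw [← card_biUnion]
  · congr 1
    ext z
    simp only [mem_filter, mem_biUnion, Set.mem_toFinset, Set.mem_sUnion]
    tauto
  · intro r hr r' hr' hne
    rw [Set.coe_toFinset] at hr hr'
    rw [Function.onFun, disjoint_left]
    intro z hz hz'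
    exact hne (hS.eq_of_mem_of_mem (hP hr) (hP hr') (mem_filter.1 hz).2 (mem_filter.1 hz').2)

lemma IsScheme.card_sUnion_eq_sum_nval (hS : IsScheme S) (hH : H ⊆ S) (x : X) :
    #{z | (x, z) ∈ ⋃₀ H} = ∑ h ∈ H.toFinset, nval h := by
  rw [hS.card_filter_mem_sUnion hH univ]
  refine sum_congr rfl fun h hh => ?_
  rw [hS.nval_eq_card_filter (hH (Set.mem_toFinset.1 hh)) x]

lemma IsScheme.card_sUnion_eq_sum_inum (hS : IsScheme S) (hH : H ⊆ S) (hu : u ∈ S) {x y : X}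
    (hxy : (x, y) ∈ u) :
    #{z | (x, z) ∈ u ∧ (z, y) ∈ ⋃₀ H} = ∑ h ∈ H.toFinset, inum u h u := by
  rw [← filter_filter, hS.card_filter_mem_sUnion hH]
  refine sum_congr rfl fun h hh => ?_
  rw [hS.inum_eq_card_filter hu (hH (Set.mem_toFinset.1 hh)) hu hxy, filter_filter]

lemma card_mul_sum_nval_eq (hS : IsScheme S) (hH : IsClosedSub S H) (hT : IsClosedSub S T)
    (h1 : ∀ s ∈ S \ T, cprod S {s} H = cprod S {s} T) (h2 : ∀ t ∈ T \ H, cprod S {t} H = {t})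
    (hu : u ∈ S \ T) (hs : s ∈ T \ H) {x y y₀ : X} (hxy₀ : (x, y₀) ∈ u)
    (hy₀y : (y₀, y) ∈ ⋃₀ T) :
    #{z | (x, z) ∈ u ∧ (z, y) ∈ s} * ∑ h ∈ H.toFinset, nval h =
      nval (conv s) * ∑ h ∈ H.toFinset, inum u h u := by
  have key := card_mul_eq_card_mul (fun a b => (a, b) ∈ ⋃₀ H)
    (s := {a | (x, a) ∈ u ∧ (a, y) ∈ s}) (t := {b | (b, y) ∈ s})
    (m := ∑ h ∈ H.toFinset, nval h) (n := ∑ h ∈ H.toFinset, inum u h u)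
    (fun a ha => ?_) (fun b hb => ?_)
  · rw [hS.nval_eq_card_filter (hS.conv_mem (hT.subset hs.1)) y]
    exact key
  · rw [mem_filter] at ha
    rw [bipartiteAbove, filter_filter, ← hS.card_sUnion_eq_sum_nval hH.subset a]
    refine congrArg card (filter_congr fun b _ => ⟨fun h => h.2, fun h => ⟨?_, h⟩⟩)
    exact mem_of_sUnion_of_mem hS hH hT h2 hs (hH.sUnion_symm hS h) ha.2.2
  · rw [mem_filter] at hb
    obtain ⟨y', hxy', hy'b⟩ := exists_mem_of_sUnion_mem hS hH hT h1 hu hxy₀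
      (hT.sUnion_trans hS hy₀y (hT.sUnion_symm hS ⟨s, hs.1, hb.2⟩))
    rw [bipartiteBelow, filter_filter, ← hS.card_sUnion_eq_sum_inum hH.subset hu.1 hxy']
    refine congrArg card (filter_congr fun a _ => ⟨fun h => ⟨h.1.1, ?_⟩, fun h => ⟨⟨h.1, ?_⟩, ?_⟩⟩)
    · exact hH.sUnion_trans hS h.2 (hH.sUnion_symm hS hy'b)
    · exact mem_of_sUnion_of_mem hS hH hT h2 hs (hH.sUnion_trans hS h.2 hy'b) hb.2
    · exact hH.sUnion_trans hS h.2 hy'b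

lemma inum_eq_inum_of_nval_conv_eq (hS : IsScheme S) (hH : IsClosedSub S H)
    (hT : IsClosedSub S T) (h1 : ∀ s ∈ S \ T, cprod S {s} H = cprod S {s} T)
    (h2 : ∀ t ∈ T \ H, cprod S {t} H = {t}) {t t' : Set (X × X)} (hu : u ∈ S \ T)
    (ht : t ∈ T \ H) (ht' : t' ∈ T \ H) (hn : nval (conv t) = nval (conv t')) (hw : w ∈ S) :
    inum u t w = inum u t' w := by
  obtain ⟨⟨x, y⟩, hxy⟩ := hS.nonempty hw
  rw [hS.inum_eq_card_filter hu.1 (hT.subset ht.1) hw hxy,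
    hS.inum_eq_card_filter hu.1 (hT.subset ht'.1) hw hxy]
  by_cases hex : ∃ y₀, (x, y₀) ∈ u ∧ (y₀, y) ∈ ⋃₀ T
  · obtain ⟨y₀, hxy₀, hy₀y⟩ := hex
    have hpos : 0 < ∑ h ∈ H.toFinset, nval h :=
      sum_pos (fun h hh => hS.nval_pos (hH.subset (Set.mem_toFinset.1 hh)))
        (Set.toFinset_nonempty.2 hH.1)
    refine Nat.eq_of_mul_eq_mul_right hpos ?_
    rw [card_mul_sum_nval_eq hS hH hT h1 h2 hu ht hxy₀ hy₀y,
      card_mul_sum_nval_eq hS hH hT h1 h2 hu ht' hxy₀ hy₀y, hn]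
  · have hzero : ∀ r ∈ T, #{z | (x, z) ∈ u ∧ (z, y) ∈ r} = 0 := fun r hr =>
      card_eq_zero.2 (filter_eq_empty_iff.2 fun z _ hz => hex ⟨z, hz.1, r, hr, hz.2⟩)
    rw [hzero t ht.1, hzero t' ht'.1]

end Counting

def PreservesInum (T : Set (Set (X × X))) (ι : Set (X × X) → Set (X × X)) : Prop :=
  ∀ u ∈ T, ∀ v ∈ T, ∀ w ∈ T, inum u v w = inum (ι u) (ι v) (ι w)

namespace PreservesInum

variable [Finite X] {ι : Set (X × X) → Set (X × X)}

lemma map_diagRel (hι : PreservesInum T ι) (hS : IsScheme S) (hT : IsClosedSub S T)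
    (hmaps : Set.MapsTo ι T T) (hsurj : Set.SurjOn ι T T) : ι (diagRel X) = diagRel X := by
  have hd := hT.diag_mem hS
  obtain ⟨b, hb, hbd⟩ := hsurj hd
  have h := hS.inum_diagRel_ne_zero (hT.subset hb)
  rw [hι _ hd _ hb _ hb, hbd] at h
  exact hS.eq_diagRel_of_inum_ne_zero (hT.subset (hmaps hd)) h

lemma map_conv (hι : PreservesInum T ι) (hS : IsScheme S) (hT : IsClosedSub S T)
    (hmaps : Set.MapsTo ι T T) (hsurj : Set.SurjOn ι T T) (ht : t ∈ T) :
    ι (conv t) = conv (ι t) := by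
  have h := (hS.nval_pos (hT.subset ht)).ne'
  rw [← hS.inum_conv_diagRel (hT.subset ht), hι _ ht _ (hT.conv_mem hS ht) _ (hT.diag_mem hS),
    hι.map_diagRel hS hT hmaps hsurj] at h
  exact hS.eq_conv_of_inum_diagRel_ne_zero (hT.subset (hmaps ht))
    (hT.subset (hmaps (hT.conv_mem hS ht))) h

lemma nval_map (hι : PreservesInum T ι) (hS : IsScheme S) (hT : IsClosedSub S T)
    (hmaps : Set.MapsTo ι T T) (hsurj : Set.SurjOn ι T T) (ht : t ∈ T) :
    nval (ι t) = nval t := by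
  rw [← hS.inum_conv_diagRel (hT.subset (hmaps ht)), ← hι.map_conv hS hT hmaps hsurj ht,
    ← hι.map_diagRel hS hT hmaps hsurj, ← hι _ ht _ (hT.conv_mem hS ht) _ (hT.diag_mem hS),
    hS.inum_conv_diagRel (hT.subset ht)]

end PreservesInum

section Extension

variable {ι : Set (X × X) → Set (X × X)}

lemma inum_map_middle [Fintype X] (hS : IsScheme S) (hH : IsClosedSub S H)
    (hT : IsClosedSub S T) (h1 : ∀ s ∈ S \ T, cprod S {s} H = cprod S {s} T)
    (h2 : ∀ t ∈ T \ H, cprod S {t} H = {t}) (hbij : Set.BijOn ι T T) (hι : PreservesInum T ι)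
    (hfix : ∀ h ∈ H, ι h = h) (hu : u ∈ S \ T) (ht : t ∈ T) (hw : w ∈ S) :
    inum u t w = inum u (ι t) w := by
  by_cases htH : t ∈ H
  · rw [hfix t htH]
  have hιt : ι t ∈ T \ H := ⟨hbij.mapsTo ht, fun h => htH <|
    hbij.injOn (hbij.mapsTo ht) ht (hfix _ h) ▸ h⟩
  refine inum_eq_inum_of_nval_conv_eq hS hH hT h1 h2 hu ⟨ht, htH⟩ hιt ?_ hw
  rw [← hι.map_conv hS hT hbij.mapsTo hbij.surjOn ht,
    hι.nval_map hS hT hbij.mapsTo hbij.surjOn (hT.conv_mem hS ht)]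

lemma inum_map_left [Finite X] (hS : IsScheme S) (hT : IsClosedSub S T)
    (hmaps : Set.MapsTo ι T T) (hsurj : Set.SurjOn ι T T) (hι : PreservesInum T ι)
    (hmid : ∀ u ∈ S \ T, ∀ t ∈ T, ∀ w ∈ S, inum u t w = inum u (ι t) w)
    (ht : t ∈ T) (hv : v ∈ S \ T) (hw : w ∈ S) : inum t v w = inum (ι t) v w := by
  rw [inum_eq_inum_conv t, inum_eq_inum_conv (ι t), ← hι.map_conv hS hT hmaps hsurj ht]
  exact hmid _ ⟨hS.conv_mem hv.1, fun h => hv.2 (hT.conv_mem hS h)⟩ _ (hT.conv_mem hS ht) _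
    (hS.conv_mem hw)

lemma inum_map_right [Fintype X] (hS : IsScheme S) (hT : IsClosedSub S T)
    (hmaps : Set.MapsTo ι T T) (hsurj : Set.SurjOn ι T T) (hι : PreservesInum T ι)
    (hmid : ∀ u ∈ S \ T, ∀ t ∈ T, ∀ w ∈ S, inum u t w = inum u (ι t) w)
    (hu : u ∈ S) (hv : v ∈ S \ T) (ht : t ∈ T) : inum u v t = inum u v (ι t) := by
  have h := hS.nval_mul_inum hu hv.1 (hT.subset ht)
  have h' := hS.nval_mul_inum hu hv.1 (hT.subset (hmaps ht))
  rw [hι.nval_map hS hT hmaps hsurj ht, ← hι.map_conv hS hT hmaps hsurj ht,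
    ← hmid v hv _ (hT.conv_mem hS ht) _ (hS.conv_mem hu)] at h'
  exact Nat.eq_of_mul_eq_mul_left (hS.nval_pos (hT.subset ht)) (h.trans h'.symm)

end Extension

end

theorem stmt14_general {X : Type*} [Fintype X] (S H T : Set (Set (X × X)))
    (hS : IsScheme S) (hH : IsClosedSub S H) (hTcl : IsClosedSub S T)
    (h1 : ∀ s ∈ S \ T, cprod S {s} H = cprod S {s} T)
    (h2 : ∀ t ∈ T \ H, cprod S {t} H = {t})
    (ι : Set (X × X) → Set (X × X)) (hbij : Set.BijOn ι T T)
    (hautT : ∀ u ∈ T, ∀ v ∈ T, ∀ w ∈ T, inum u v w = inum (ι u) (ι v) (ι w))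
    (hfix : ∀ h ∈ H, ι h = h) :
    ∀ u ∈ S, ∀ v ∈ S, ∀ w ∈ S,
      inum u v w = inum (extOf T ι u) (extOf T ι v) (extOf T ι w) := by
  have hmid : ∀ u ∈ S \ T, ∀ t ∈ T, ∀ w ∈ S, inum u t w = inum u (ι t) w :=
    fun u hu t ht w hw => inum_map_middle hS hH hTcl h1 h2 hbij hautT hfix hu ht hw
  have hmaps := hbij.mapsTo
  intro u hu v hv w hw
  by_cases hu' : u ∈ T <;> by_cases hv' : v ∈ T <;> by_cases hw' : w ∈ T <;>
    simp only [extOf, hu', hv', hw', if_true, if_false]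
  · exact hautT u hu' v hv' w hw'
  · rw [hTcl.inum_eq_zero_of_not_mem_right hS hu' hv' hw hw',
      hTcl.inum_eq_zero_of_not_mem_right hS (hmaps hu') (hmaps hv') hw hw']
  · rw [hTcl.inum_eq_zero_of_not_mem_middle hS hu' hv hv' hw',
      hTcl.inum_eq_zero_of_not_mem_middle hS (hmaps hu') hv hv' (hmaps hw')]
  · exact inum_map_left hS hTcl hmaps hbij.surjOn hautT hmid hu' ⟨hv, hv'⟩ hw
  · rw [hTcl.inum_eq_zero_of_not_mem_left hS hu hu' hv' hw',
      hTcl.inum_eq_zero_of_not_mem_left hS hu hu' (hmaps hv') (hmaps hw')]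
  · exact hmid u ⟨hu, hu'⟩ v hv' w hw
  · exact inum_map_right hS hTcl hmaps hbij.surjOn hautT hmid hu ⟨hv, hv'⟩ hw'

/-- Theorem 2: under conditions (i) and (ii), every `ι ∈ Aut(T)` fixing `H`
pointwise extends to an algebraic automorphism of `S`. -/
theorem stmt14 {X : Type*} [Fintype X] (S H T : Set (Set (X × X)))
    (hS : IsScheme S) (hH : IsClosedSub S H) (hTcl : IsClosedSub S T) (hHT : H ⊆ T)
    (hsn : IsStronglyNormal S T)
    (h1 : ∀ s ∈ S \ T, cprod S {s} H = cprod S {s} T)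
    (h2 : ∀ t ∈ T \ H, cprod S {t} H = {t})
    (ι : Set (X × X) → Set (X × X)) (hbij : Set.BijOn ι T T)
    (hautT : ∀ u ∈ T, ∀ v ∈ T, ∀ w ∈ T, inum u v w = inum (ι u) (ι v) (ι w))
    (hfix : ∀ h ∈ H, ι h = h) :
    ∀ u ∈ S, ∀ v ∈ S, ∀ w ∈ S,
      inum u v w = inum (extOf T ι u) (extOf T ι v) (extOf T ι w) :=
  stmt14_general S H T hS hH hTcl h1 h2 ι hbij hautT hfix
end

section
/- Let (X,S) be an association scheme with T := O_θ(S) = O^θ(S) ≅ C_p × C_p, and let (P, L) be the induced partial linear space on X/T. Then every automorphism of the quotient scheme (X/T, S//T) induces an automorphism of (P, L); that is, Aut(X/T, S//T) embeds as a subgroup of Aut(P, L). -/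
open scoped Classical

/-- The quotient-scheme relation `s^T` on the cosets `X/T`. -/
noncomputable def qrel {X : Type*} (S T : Set (Set (X × X))) (s : Set (X × X)) :
    Set (Set X × Set X) :=
  {q | ∃ x y : X, q.1 = coset T x ∧ q.2 = coset T y ∧
    ∃ u ∈ cprod S (cprod S T {s}) T, (x, y) ∈ u}
section Aux

set_option linter.unusedSectionVars false
variable {X : Type*} [Fintype X] {S T : Set (Set (X × X))} {p : ℕ}
  {e : ZMod p × ZMod p → Set (X × X)}

/-- The unique relation containing `(x, y)`. -/
noncomputable def relOf (hS : IsScheme S) (x y : X) : Set (X × X) :=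
  (hS.1 x y).exists.choose

lemma relOf_mem (hS : IsScheme S) (x y : X) :
    relOf hS x y ∈ S ∧ (x, y) ∈ relOf hS x y :=
  (hS.1 x y).exists.choose_spec

lemma rel_eq (hS : IsScheme S) {s : Set (X × X)} {x y : X}
    (hs : s ∈ S) (hxy : (x, y) ∈ s) : s = relOf hS x y :=
  ((hS.1 x y).unique ⟨hs, hxy⟩ ⟨(relOf_mem hS x y).1, (relOf_mem hS x y).2⟩)

/-- Transfer a witness from one pair of `u` to another. -/
lemma transfer (hS : IsScheme S) {s t u : Set (X × X)}
    (hs : s ∈ S) (ht : t ∈ S) (hu : u ∈ S) {x y x' y' : X}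
    (hxy : (x, y) ∈ u) (hx'y' : (x', y') ∈ u)
    (h : ∃ z, (x, z) ∈ s ∧ (z, y) ∈ t) : ∃ z, (x', z) ∈ s ∧ (z, y') ∈ t := by
  have hcard := hS.2.2.2.2 s hs t ht u hu (x, y) hxy (x', y') hx'y'
  have h1 : 0 < Nat.card {z : X | (x, z) ∈ s ∧ (z, y) ∈ t} := by
    obtain ⟨z, hz⟩ := h
    have : Nonempty {z : X | (x, z) ∈ s ∧ (z, y) ∈ t} := ⟨⟨z, hz⟩⟩
    exact Nat.card_pos
  rw [hcard] at h1
  have : Nonempty {z : X | (x', z) ∈ s ∧ (z, y') ∈ t} := Nat.card_pos_iff.mp h1 |>.1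
  obtain ⟨⟨z, hz⟩⟩ := this
  exact ⟨z, hz⟩

lemma inum_eq (hS : IsScheme S) {s t u : Set (X × X)}
    (hs : s ∈ S) (ht : t ∈ S) (hu : u ∈ S) {x y : X} (hxy : (x, y) ∈ u) :
    inum s t u = Nat.card {z : X | (x, z) ∈ s ∧ (z, y) ∈ t} := by
  have : {n | ∃ p ∈ u, n = Nat.card {z : X | (p.1, z) ∈ s ∧ (z, p.2) ∈ t}}
      = {Nat.card {z : X | (x, z) ∈ s ∧ (z, y) ∈ t}} := by
    ext n
    constructor
    · rintro ⟨⟨a, b⟩, hab, rfl⟩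
      exact hS.2.2.2.2 s hs t ht u hu (a, b) hab (x, y) hxy
    · rintro rfl
      exact ⟨(x, y), hxy, rfl⟩
  rw [inum, this, csSup_singleton]

lemma cprod_pair_iff (hS : IsScheme S) {s t u : Set (X × X)}
    (hs : s ∈ S) (ht : t ∈ S) (hu : u ∈ S) {x y : X} (hxy : (x, y) ∈ u) :
    u ∈ cprod S {s} {t} ↔ ∃ z, (x, z) ∈ s ∧ (z, y) ∈ t := by
  rw [cprod]
  constructor
  · rintro ⟨-, p, hp, q, hq, hne⟩
    rw [Set.mem_singleton_iff] at hp hq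
    rw [hp, hq] at hne
    rw [inum_eq hS hs ht hu hxy] at hne
    have : Nonempty {z : X | (x, z) ∈ s ∧ (z, y) ∈ t} := by
      rcases Nat.card_pos_iff.mp (Nat.pos_of_ne_zero hne) with ⟨h, -⟩
      exact h
    obtain ⟨⟨z, hz⟩⟩ := this
    exact ⟨z, hz⟩
  · rintro ⟨z, hz⟩
    refine ⟨hu, s, rfl, t, rfl, ?_⟩
    rw [inum_eq hS hs ht hu hxy]
    have : Nonempty {z : X | (x, z) ∈ s ∧ (z, y) ∈ t} := ⟨⟨z, hz⟩⟩
    exact Nat.card_pos.ne'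

end Aux
section Aux2
set_option linter.unusedSectionVars false
variable {X : Type*} [Fintype X] {S T : Set (Set (X × X))} {p : ℕ}
  {e : ZMod p × ZMod p → Set (X × X)}

lemma e_mem (he : IsoElemAb S T p e) (hTS : T ⊆ S) (a : ZMod p × ZMod p) :
    e a ∈ S := hTS (he.1 a)

lemma exists_pair (hS : IsScheme S) (he : IsoElemAb S T p e) (hTS : T ⊆ S)
    (a : ZMod p × ZMod p) (x : X) : ∃ z, (x, z) ∈ e a ∧ (z, x) ∈ e (-a) := by
  have hd : diagRel X ∈ cprod S {e a} {e (-a)} := by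
    rw [he.2.2.2.2, add_neg_cancel, he.2.2.2.1]
    exact rfl
  have hdiag : (x, x) ∈ diagRel X := rfl
  exact (cprod_pair_iff hS (e_mem he hTS a) (e_mem he hTS (-a)) hS.2.2.1 hdiag).mp hd

lemma conv_e (hS : IsScheme S) (he : IsoElemAb S T p e) (hTS : T ⊆ S)
    (a : ZMod p × ZMod p) : conv (e a) = e (-a) := by
  obtain ⟨⟨x, -⟩, -⟩ := hS.2.1 _ hS.2.2.1
  obtain ⟨z, h1, h2⟩ := exists_pair hS he hTS a x
  have hc : (z, x) ∈ conv (e a) := h1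
  exact (rel_eq hS (hS.2.2.2.1 _ (e_mem he hTS a)) hc).trans
    (rel_eq hS (e_mem he hTS (-a)) h2).symm

lemma mem_e_symm (hS : IsScheme S) (he : IsoElemAb S T p e) (hTS : T ⊆ S)
    {a : ZMod p × ZMod p} {x z : X} (h : (x, z) ∈ e a) : (z, x) ∈ e (-a) := by
  rw [← conv_e hS he hTS a]
  exact h

lemma mem_e_symm' (hS : IsScheme S) (he : IsoElemAb S T p e) (hTS : T ⊆ S)
    {a : ZMod p × ZMod p} {x z : X} (h : (x, z) ∈ e (-a)) : (z, x) ∈ e a := by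
  have := mem_e_symm hS he hTS h
  rwa [neg_neg] at this

lemma succ_unique (hS : IsScheme S) (he : IsoElemAb S T p e) (hTS : T ⊆ S)
    {a : ZMod p × ZMod p} {x z z₂ : X} (h1 : (x, z) ∈ e a) (h2 : (x, z₂) ∈ e a) :
    z = z₂ := by
  have h1' : (z, x) ∈ e (-a) := mem_e_symm hS he hTS h1
  obtain ⟨huS, huz⟩ := relOf_mem hS z z₂
  have hu : relOf hS z z₂ ∈ cprod S {e (-a)} {e a} :=
    (cprod_pair_iff hS (e_mem he hTS (-a)) (e_mem he hTS a) huS huz).mpr ⟨x, h1', h2⟩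
  rw [he.2.2.2.2, neg_add_cancel, he.2.2.2.1] at hu
  rw [Set.mem_singleton_iff] at hu
  have : (z, z₂) ∈ diagRel X := hu ▸ huz
  exact this

lemma pred_unique (hS : IsScheme S) (he : IsoElemAb S T p e) (hTS : T ⊆ S)
    {a : ZMod p × ZMod p} {x z z₂ : X} (h1 : (z, x) ∈ e a) (h2 : (z₂, x) ∈ e a) :
    z = z₂ := by
  have h2' : (x, z₂) ∈ e (-a) := mem_e_symm hS he hTS h2
  obtain ⟨huS, huz⟩ := relOf_mem hS z z₂
  have hu : relOf hS z z₂ ∈ cprod S {e a} {e (-a)} :=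
    (cprod_pair_iff hS (e_mem he hTS a) (e_mem he hTS (-a)) huS huz).mpr ⟨x, h1, h2'⟩
  rw [he.2.2.2.2, add_neg_cancel, he.2.2.2.1] at hu
  rw [Set.mem_singleton_iff] at hu
  have : (z, z₂) ∈ diagRel X := hu ▸ huz
  exact this

lemma cprod_e_left (hS : IsScheme S) (he : IsoElemAb S T p e) (hTS : T ⊆ S)
    {s : Set (X × X)} (hs : s ∈ S) {a : ZMod p × ZMod p} {x z y : X}
    (hxz : (x, z) ∈ e a) (hzy : (z, y) ∈ s) :
    cprod S {e a} {s} = {relOf hS x y} := by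
  ext u
  rw [Set.mem_singleton_iff]
  constructor
  · intro hu
    have huS : u ∈ S := hu.1
    obtain ⟨⟨x₁, y₁⟩, hx1y1⟩ := hS.2.1 u huS
    obtain ⟨z₁, hx1z1, hz1y1⟩ :=
      (cprod_pair_iff hS (e_mem he hTS a) hs huS hx1y1).mp hu
    have hwit : ∃ w, (z, w) ∈ e (-a) ∧ (w, y) ∈ relOf hS x y :=
      ⟨x, mem_e_symm hS he hTS hxz, (relOf_mem hS x y).2⟩
    obtain ⟨w, hw1, hw2⟩ := transfer hS (e_mem he hTS (-a)) (relOf_mem hS x y).1 hs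
      hzy hz1y1 hwit
    have hwz1 : (w, z₁) ∈ e a := mem_e_symm' hS he hTS hw1
    have hwx1 : w = x₁ := pred_unique hS he hTS hwz1 hx1z1
    rw [hwx1] at hw2
    exact ((hS.1 x₁ y₁).unique ⟨huS, hx1y1⟩ ⟨(relOf_mem hS x y).1, hw2⟩)
  · rintro rfl
    exact (cprod_pair_iff hS (e_mem he hTS a) hs (relOf_mem hS x y).1
      (relOf_mem hS x y).2).mpr ⟨z, hxz, hzy⟩

lemma cprod_e_right (hS : IsScheme S) (he : IsoElemAb S T p e) (hTS : T ⊆ S)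
    {s : Set (X × X)} (hs : s ∈ S) {a : ZMod p × ZMod p} {x y z : X}
    (hxy : (x, y) ∈ s) (hyz : (y, z) ∈ e a) :
    cprod S {s} {e a} = {relOf hS x z} := by
  ext u
  rw [Set.mem_singleton_iff]
  constructor
  · intro hu
    have huS : u ∈ S := hu.1
    obtain ⟨⟨x₁, y₁⟩, hx1y1⟩ := hS.2.1 u huS
    obtain ⟨z₁, hx1z1, hz1y1⟩ :=
      (cprod_pair_iff hS hs (e_mem he hTS a) huS hx1y1).mp hu
    have hwit : ∃ w, (x, w) ∈ relOf hS x z ∧ (w, y) ∈ e (-a) :=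
      ⟨z, (relOf_mem hS x z).2, mem_e_symm hS he hTS hyz⟩
    obtain ⟨w, hw1, hw2⟩ := transfer hS (relOf_mem hS x z).1 (e_mem he hTS (-a)) hs
      hxy hx1z1 hwit
    have hz1w : (z₁, w) ∈ e a := mem_e_symm' hS he hTS hw2
    have hwy1 : w = y₁ := succ_unique hS he hTS hz1w hz1y1
    rw [hwy1] at hw1
    exact ((hS.1 x₁ y₁).unique ⟨huS, hx1y1⟩ ⟨(relOf_mem hS x z).1, hw1⟩)
  · rintro rfl
    exact (cprod_pair_iff hS hs (e_mem he hTS a) (relOf_mem hS x z).1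
      (relOf_mem hS x z).2).mpr ⟨y, hxy, hyz⟩

end Aux2
section Aux3
set_option linter.unusedSectionVars false
variable {X : Type*} [Fintype X] {S T : Set (Set (X × X))} {p : ℕ}
  {e : ZMod p × ZMod p → Set (X × X)}

lemma lstab_step_left (hS : IsScheme S) (he : IsoElemAb S T p e) (hTS : T ⊆ S)
    {s s' : Set (X × X)} (hs : s ∈ S) (hs' : s' ∈ S) {a b : ZMod p × ZMod p}
    (hb : cprod S {e b} {s} = {s}) (ha : cprod S {e a} {s} = {s'}) :
    cprod S {e b} {s'} = {s'} := by
  obtain ⟨⟨x', y'⟩, hx'y'⟩ := hS.2.1 s' hs'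
  have hmem : s' ∈ cprod S {e a} {s} := by rw [ha]; exact rfl
  obtain ⟨z, hx'z, hzy'⟩ := (cprod_pair_iff hS (e_mem he hTS a) hs hs' hx'y').mp hmem
  obtain ⟨x₂w, -, hx₂⟩ := exists_pair hS he hTS (-b) x'
  set x₂ := x₂w with hx₂def
  rw [neg_neg] at hx₂
  -- (x₂, z) ∈ e (b + a)
  have h1 : cprod S {e b} {e a} = {relOf hS x₂ z} :=
    cprod_e_left hS he hTS (e_mem he hTS a) hx₂ hx'z
  rw [he.2.2.2.2] at h1
  have h2 : e (b + a) = relOf hS x₂ z := by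
    rwa [Set.singleton_eq_singleton_iff] at h1
  have hx₂z : (x₂, z) ∈ e (a + b) := by
    rw [add_comm, h2]; exact (relOf_mem hS x₂ z).2
  -- decompose
  have h3 : e (a + b) ∈ cprod S {e a} {e b} := by
    rw [he.2.2.2.2]; exact rfl
  obtain ⟨w, hx₂w2, hwz⟩ := (cprod_pair_iff hS (e_mem he hTS a) (e_mem he hTS b)
    (e_mem he hTS (a + b)) hx₂z).mp h3
  -- (w, y') ∈ s
  have h4 : cprod S {e b} {s} = {relOf hS w y'} :=
    cprod_e_left hS he hTS hs hwz hzy'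
  rw [hb, Set.singleton_eq_singleton_iff] at h4
  have hwy' : (w, y') ∈ s := by rw [h4]; exact (relOf_mem hS w y').2
  -- (x₂, y') ∈ s'
  have h5 : cprod S {e a} {s} = {relOf hS x₂ y'} :=
    cprod_e_left hS he hTS hs hx₂w2 hwy'
  rw [ha, Set.singleton_eq_singleton_iff] at h5
  have hx₂y' : (x₂, y') ∈ s' := by rw [h5]; exact (relOf_mem hS x₂ y').2
  have h6 : cprod S {e b} {s'} = {relOf hS x₂ y'} :=
    cprod_e_left hS he hTS hs' hx₂ hx'y'
  rw [h6, ← h5]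

lemma lstab_iff_left (hS : IsScheme S) (he : IsoElemAb S T p e) (hTS : T ⊆ S)
    {s s' : Set (X × X)} (hs : s ∈ S) (hs' : s' ∈ S) {a : ZMod p × ZMod p}
    (ha : cprod S {e a} {s} = {s'}) (b : ZMod p × ZMod p) :
    cprod S {e b} {s} = {s} ↔ cprod S {e b} {s'} = {s'} := by
  constructor
  · intro hb; exact lstab_step_left hS he hTS hs hs' hb ha
  · intro hb
    obtain ⟨⟨x', y'⟩, hx'y'⟩ := hS.2.1 s' hs'
    have hmem : s' ∈ cprod S {e a} {s} := by rw [ha]; exact rfl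
    obtain ⟨z, hx'z, hzy'⟩ :=
      (cprod_pair_iff hS (e_mem he hTS a) hs hs' hx'y').mp hmem
    have hzx' : (z, x') ∈ e (-a) := mem_e_symm hS he hTS hx'z
    have ha' : cprod S {e (-a)} {s'} = {s} := by
      rw [cprod_e_left hS he hTS hs' hzx' hx'y',
        ← rel_eq hS hs hzy']
    exact lstab_step_left hS he hTS hs' hs hb ha'

lemma lstab_step_right (hS : IsScheme S) (he : IsoElemAb S T p e) (hTS : T ⊆ S)
    {s s' : Set (X × X)} (hs : s ∈ S) (hs' : s' ∈ S) {a b : ZMod p × ZMod p}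
    (hb : cprod S {e b} {s} = {s}) (ha : cprod S {s} {e a} = {s'}) :
    cprod S {e b} {s'} = {s'} := by
  obtain ⟨⟨x', y'⟩, hx'y'⟩ := hS.2.1 s' hs'
  have hmem : s' ∈ cprod S {s} {e a} := by rw [ha]; exact rfl
  obtain ⟨w, hx'w, hwy'⟩ := (cprod_pair_iff hS hs (e_mem he hTS a) hs' hx'y').mp hmem
  obtain ⟨x₂, -, hx₂⟩ := exists_pair hS he hTS (-b) x'
  rw [neg_neg] at hx₂
  have h4 : cprod S {e b} {s} = {relOf hS x₂ w} :=
    cprod_e_left hS he hTS hs hx₂ hx'w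
  rw [hb, Set.singleton_eq_singleton_iff] at h4
  have hx₂w : (x₂, w) ∈ s := by rw [h4]; exact (relOf_mem hS x₂ w).2
  have h5 : cprod S {s} {e a} = {relOf hS x₂ y'} :=
    cprod_e_right hS he hTS hs hx₂w hwy'
  rw [ha, Set.singleton_eq_singleton_iff] at h5
  have h6 : cprod S {e b} {s'} = {relOf hS x₂ y'} :=
    cprod_e_left hS he hTS hs' hx₂ hx'y'
  rw [h6, ← h5]

lemma lstab_iff_right (hS : IsScheme S) (he : IsoElemAb S T p e) (hTS : T ⊆ S)
    {s s' : Set (X × X)} (hs : s ∈ S) (hs' : s' ∈ S) {a : ZMod p × ZMod p}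
    (ha : cprod S {s} {e a} = {s'}) (b : ZMod p × ZMod p) :
    cprod S {e b} {s} = {s} ↔ cprod S {e b} {s'} = {s'} := by
  constructor
  · intro hb; exact lstab_step_right hS he hTS hs hs' hb ha
  · intro hb
    obtain ⟨⟨x', y'⟩, hx'y'⟩ := hS.2.1 s' hs'
    have hmem : s' ∈ cprod S {s} {e a} := by rw [ha]; exact rfl
    obtain ⟨w, hx'w, hwy'⟩ :=
      (cprod_pair_iff hS hs (e_mem he hTS a) hs' hx'y').mp hmem
    have hy'w : (y', w) ∈ e (-a) := mem_e_symm hS he hTS hwy'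
    have ha' : cprod S {s'} {e (-a)} = {s} := by
      rw [cprod_e_right hS he hTS hs' hx'y' hy'w, ← rel_eq hS hs hx'w]
    exact lstab_step_right hS he hTS hs' hs hb ha'

lemma lstab_eq_of_left (hS : IsScheme S) (he : IsoElemAb S T p e) (hTS : T ⊆ S)
    {s s' : Set (X × X)} (hs : s ∈ S) (hs' : s' ∈ S) {a : ZMod p × ZMod p}
    (ha : cprod S {e a} {s} = {s'}) : lstab S T s' = lstab S T s := by
  ext t
  simp only [lstab, Set.mem_setOf_eq]
  constructor
  · rintro ⟨htT, h⟩
    obtain ⟨b, rfl⟩ := he.2.2.1 t htT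
    exact ⟨htT, (lstab_iff_left hS he hTS hs hs' ha b).mpr h⟩
  · rintro ⟨htT, h⟩
    obtain ⟨b, rfl⟩ := he.2.2.1 t htT
    exact ⟨htT, (lstab_iff_left hS he hTS hs hs' ha b).mp h⟩

lemma lstab_eq_of_right (hS : IsScheme S) (he : IsoElemAb S T p e) (hTS : T ⊆ S)
    {s s' : Set (X × X)} (hs : s ∈ S) (hs' : s' ∈ S) {a : ZMod p × ZMod p}
    (ha : cprod S {s} {e a} = {s'}) : lstab S T s' = lstab S T s := by
  ext t
  simp only [lstab, Set.mem_setOf_eq]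
  constructor
  · rintro ⟨htT, h⟩
    obtain ⟨b, rfl⟩ := he.2.2.1 t htT
    exact ⟨htT, (lstab_iff_right hS he hTS hs hs' ha b).mpr h⟩
  · rintro ⟨htT, h⟩
    obtain ⟨b, rfl⟩ := he.2.2.1 t htT
    exact ⟨htT, (lstab_iff_right hS he hTS hs hs' ha b).mp h⟩

lemma pairStab_eq (hS : IsScheme S) (T : Set (Set (X × X))) (x y : X) :
    pairStab S T x y = lstab S T (relOf hS x y) := by
  ext t
  simp only [pairStab, lstab, Set.mem_setOf_eq]
  constructor
  · rintro ⟨htT, h⟩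
    exact ⟨htT, h _ (relOf_mem hS x y).1 (relOf_mem hS x y).2⟩
  · rintro ⟨htT, h⟩
    refine ⟨htT, fun s hs hxy => ?_⟩
    rw [rel_eq hS hs hxy]
    exact h

end Aux3
section Aux4
set_option linter.unusedSectionVars false
variable {X : Type*} [Fintype X] {S T : Set (Set (X × X))} {p : ℕ}
  {e : ZMod p × ZMod p → Set (X × X)}

lemma mem_coset_self (he : IsoElemAb S T p e) (x : X) : x ∈ coset T x := by
  refine ⟨diagRel X, ?_, rfl⟩
  rw [← he.2.2.2.1]
  exact he.1 0

lemma coset_exists (he : IsoElemAb S T p e) {x x' : X}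
    (h : coset T x = coset T x') : ∃ a, (x, x') ∈ e a := by
  have hx' : x' ∈ coset T x := h ▸ mem_coset_self he x'
  obtain ⟨t, htT, hxx'⟩ := hx'
  obtain ⟨a, rfl⟩ := he.2.2.1 t htT
  exact ⟨a, hxx'⟩

lemma qrel_lstab (hS : IsScheme S) (he : IsoElemAb S T p e) (hTS : T ⊆ S)
    {s : Set (X × X)} (hs : s ∈ S) {x y : X}
    (h : (coset T x, coset T y) ∈ qrel S T s) :
    pairStab S T x y = lstab S T s := by
  obtain ⟨x₁, y₁, h1, h2, u, hu, hx1y1⟩ := h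
  simp only at h1 h2
  obtain ⟨huS, v, hv, t2, ht2T, hinum2⟩ := hu
  obtain ⟨hvS, t1, ht1T, q, hq, hinum1⟩ := hv
  rw [Set.mem_singleton_iff] at hq
  rw [hq] at hinum1
  obtain ⟨a1, rfl⟩ := he.2.2.1 t1 ht1T
  obtain ⟨a2, rfl⟩ := he.2.2.1 t2 ht2T
  -- Step 1 : cprod S {e a1} {s} = {v}
  obtain ⟨⟨xv, yv⟩, hxvyv⟩ := hS.2.1 v hvS
  have hvmem : v ∈ cprod S {e a1} {s} := ⟨hvS, e a1, rfl, s, rfl, hinum1⟩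
  obtain ⟨z, hxvz, hzyv⟩ :=
    (cprod_pair_iff hS (e_mem he hTS a1) hs hvS hxvyv).mp hvmem
  have step1 : cprod S {e a1} {s} = {v} := by
    rw [cprod_e_left hS he hTS hs hxvz hzyv, ← rel_eq hS hvS hxvyv]
  -- Step 2 : cprod S {v} {e a2} = {u}
  have humem : u ∈ cprod S {v} {e a2} := ⟨huS, v, rfl, e a2, rfl, hinum2⟩
  obtain ⟨w, hx1w, hwy1⟩ :=
    (cprod_pair_iff hS hvS (e_mem he hTS a2) huS hx1y1).mp humem
  have step2 : cprod S {v} {e a2} = {u} := by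
    rw [cprod_e_right hS he hTS hvS hx1w hwy1, ← rel_eq hS huS hx1y1]
  have lu : lstab S T u = lstab S T s := by
    rw [lstab_eq_of_right hS he hTS hvS huS step2,
      lstab_eq_of_left hS he hTS hs hvS step1]
  -- move representatives
  obtain ⟨a, hxx₁⟩ := coset_exists he h1
  obtain ⟨c, hyy₁⟩ := coset_exists he h2
  have hxy1 : cprod S {e a} {u} = {relOf hS x y₁} :=
    cprod_e_left hS he hTS huS hxx₁ hx1y1
  have l1 : lstab S T (relOf hS x y₁) = lstab S T u :=
    lstab_eq_of_left hS he hTS huS (relOf_mem hS x y₁).1 hxy1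
  have hxy2 : cprod S {relOf hS x y} {e c} = {relOf hS x y₁} :=
    cprod_e_right hS he hTS (relOf_mem hS x y).1 (relOf_mem hS x y).2 hyy₁
  have l2 : lstab S T (relOf hS x y₁) = lstab S T (relOf hS x y) :=
    lstab_eq_of_right hS he hTS (relOf_mem hS x y).1 (relOf_mem hS x y₁).1 hxy2
  rw [pairStab_eq hS T x y, ← l2, l1, lu]

lemma qrel_self (hS : IsScheme S) (he : IsoElemAb S T p e) (hTS : T ⊆ S)
    (x y : X) : (coset T x, coset T y) ∈ qrel S T (relOf hS x y) := by
  set s := relOf hS x y with hsdef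
  have hsS : s ∈ S := (relOf_mem hS x y).1
  have hx0 : (x, x) ∈ e 0 := by rw [he.2.2.2.1]; exact rfl
  have hy0 : (y, y) ∈ e 0 := by rw [he.2.2.2.1]; exact rfl
  have c1 : cprod S {e 0} {s} = {s} := by
    rw [cprod_e_left hS he hTS hsS hx0 (relOf_mem hS x y).2]
  have c2 : cprod S {s} {e 0} = {s} := by
    rw [cprod_e_right hS he hTS hsS (relOf_mem hS x y).2 hy0]
  have hm1 : s ∈ cprod S {e 0} {s} := by rw [c1]; exact rfl
  have hm2 : s ∈ cprod S {s} {e 0} := by rw [c2]; exact rfl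
  obtain ⟨-, p1, hp1, q1, hq1, hin1⟩ := hm1
  rw [Set.mem_singleton_iff] at hp1 hq1
  rw [hp1, hq1] at hin1
  obtain ⟨-, p2, hp2, q2, hq2, hin2⟩ := hm2
  rw [Set.mem_singleton_iff] at hp2 hq2
  rw [hp2, hq2] at hin2
  have hsT : s ∈ cprod S T {s} := ⟨hsS, e 0, he.1 0, s, rfl, hin1⟩
  have hsTT : s ∈ cprod S (cprod S T {s}) T := ⟨hsS, s, hsT, e 0, he.1 0, hin2⟩
  exact ⟨x, y, rfl, rfl, s, hsTT, (relOf_mem hS x y).2⟩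

end Aux4
section Aux5
set_option linter.unusedSectionVars false
variable {X : Type*} [Fintype X] {S T : Set (Set (X × X))} {p : ℕ}
  {e : ZMod p × ZMod p → Set (X × X)}

lemma lineOf_subset_pts (S : Set (Set (X × X))) (T : Set (Set (X × X))) (x : X)
    (M : Set (Set (X × X))) : lineOf S T x M ⊆ pts T := by
  rintro C hC
  rcases Set.mem_insert_iff.mp hC with rfl | ⟨y, rfl, -, -⟩
  · exact ⟨x, rfl⟩
  · exact ⟨y, rfl⟩

lemma pairStab_image (hS : IsScheme S) (he : IsoElemAb S T p e) (hTS : T ⊆ S)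
    {φ : Set X → Set X}
    (hq : ∀ s ∈ S, ∀ C ∈ pts T, ∀ D ∈ pts T,
      ((C, D) ∈ qrel S T s ↔ (φ C, φ D) ∈ qrel S T s))
    {x x' y y' : X} (hx : φ (coset T x) = coset T x')
    (hy : φ (coset T y) = coset T y') :
    pairStab S T x' y' = pairStab S T x y := by
  have h0 : (coset T x, coset T y) ∈ qrel S T (relOf hS x y) := qrel_self hS he hTS x y
  have h1 := (hq (relOf hS x y) (relOf_mem hS x y).1 (coset T x) ⟨x, rfl⟩
    (coset T y) ⟨y, rfl⟩).mp h0
  rw [hx, hy] at h1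
  rw [qrel_lstab hS he hTS (relOf_mem hS x y).1 h1, pairStab_eq hS T x y]

lemma line_image (hS : IsScheme S) (he : IsoElemAb S T p e) (hTS : T ⊆ S)
    {φ : Set X → Set X} (hbij : Set.BijOn φ (pts T) (pts T))
    (hq : ∀ s ∈ S, ∀ C ∈ pts T, ∀ D ∈ pts T,
      ((C, D) ∈ qrel S T s ↔ (φ C, φ D) ∈ qrel S T s))
    {x x' : X} (hx : φ (coset T x) = coset T x') (M : Set (Set (X × X))) :
    φ '' lineOf S T x M = lineOf S T x' M := by
  ext C'
  constructor
  · rintro ⟨D, hD, rfl⟩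
    rcases Set.mem_insert_iff.mp hD with rfl | ⟨y, rfl, hne, hM⟩
    · rw [hx]; exact Set.mem_insert _ _
    · obtain ⟨y', hy'⟩ : φ (coset T y) ∈ pts T := hbij.mapsTo ⟨y, rfl⟩
      rw [hy']
      refine Set.mem_insert_iff.mpr (Or.inr ⟨y', rfl, ?_, ?_⟩)
      · intro heq
        exact hne (hbij.injOn ⟨y, rfl⟩ ⟨x, rfl⟩ (by rw [hy', hx, heq]))
      · rw [pairStab_image hS he hTS hq hx hy', hM]
  · intro hC'
    rcases Set.mem_insert_iff.mp hC' with rfl | ⟨y', rfl, hne', hM'⟩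
    · exact ⟨coset T x, Set.mem_insert _ _, hx⟩
    · obtain ⟨D, hD, hφD⟩ := hbij.surjOn (⟨y', rfl⟩ : coset T y' ∈ pts T)
      obtain ⟨y, rfl⟩ := hD
      refine ⟨coset T y, Set.mem_insert_iff.mpr (Or.inr ⟨y, rfl, ?_, ?_⟩), hφD⟩
      · intro h
        exact hne' (by rw [← hφD, h, hx])
      · rw [← pairStab_image hS he hTS hq hx hφD, hM']

end Aux5
/-- every automorphism of the quotient scheme `(X/T, S//T)` induces an
automorphism of the partial linear space `(P, L)` on `X/T`. -/
theorem stmt18 {X : Type*} [Fintype X] (p : ℕ) (hp : p.Prime)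
    (S T : Set (Set (X × X))) (hS : IsScheme S)
    (hrad : thinRadical S = T) (hres : thinResidue S = T)
    (hiso : ∃ e : ZMod p × ZMod p → Set (X × X), IsoElemAb S T p e) :
    ∀ φ : Set X → Set X, Set.BijOn φ (pts T) (pts T) →
      (∀ s ∈ S, ∀ C ∈ pts T, ∀ D ∈ pts T,
        ((C, D) ∈ qrel S T s ↔ (φ C, φ D) ∈ qrel S T s)) →
      (Set.image φ) '' (linesOf S T) = linesOf S T := by
  intro φ hbij hq
  obtain ⟨e, he⟩ := hiso
  have hTS : T ⊆ S := by rw [← hrad]; exact fun s hs => hs.1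
  apply Set.Subset.antisymm
  · rintro ℓ' ⟨ℓ, hℓ, rfl⟩
    obtain ⟨x, M, hc1, hc2, hc3, hc4, rfl, hcard⟩ := hℓ
    obtain ⟨x', hx'⟩ : φ (coset T x) ∈ pts T := hbij.mapsTo ⟨x, rfl⟩
    have him := line_image hS he hTS hbij hq hx' M
    refine ⟨x', M, hc1, hc2, hc3, hc4, him, ?_⟩
    have hinj : Set.InjOn φ (lineOf S T x M) :=
      hbij.injOn.mono (lineOf_subset_pts S T x M)
    have hcard2 : (φ '' lineOf S T x M).ncard = (lineOf S T x M).ncard :=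
      Set.ncard_image_of_injOn hinj
    rw [Nat.card_coe_set_eq, hcard2, ← Nat.card_coe_set_eq]
    exact hcard
  · intro ℓ' hℓ'
    obtain ⟨x', M, hc1, hc2, hc3, hc4, rfl, hcard⟩ := hℓ'
    obtain ⟨D, hD, hφD⟩ := hbij.surjOn (⟨x', rfl⟩ : coset T x' ∈ pts T)
    obtain ⟨x, rfl⟩ := hD
    have him := line_image hS he hTS hbij hq hφD M
    refine ⟨lineOf S T x M, ⟨x, M, hc1, hc2, hc3, hc4, rfl, ?_⟩, him⟩
    have hinj : Set.InjOn φ (lineOf S T x M) :=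
      hbij.injOn.mono (lineOf_subset_pts S T x M)
    have hcard2 : (φ '' lineOf S T x M).ncard = (lineOf S T x M).ncard :=
      Set.ncard_image_of_injOn hinj
    rw [Nat.card_coe_set_eq, ← hcard2, him, ← Nat.card_coe_set_eq]
    exact hcard
end
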